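/- arXiv:2103.00341 — 2 statements merged into one kernel-verified Lean document; each statement's English description precedes it below -/
import Mathlib

section
/- A graph G has a perfect m-star matching (i.e., a spanning subgraph each of whose components is a star K_{1,i} with 1 ≤ i ≤ m) if and only if for every independent set S in G, |N_G(S)| ≥ |S|/m. -/
open SimpleGraph

abbrev MycVert (V : Type) : Type := V ⊕ V ⊕ Unit

def mycAdj {V : Type} (G : SimpleGraph V) : MycVert V → MycVert V → Prop
  | Sum.inl a, Sum.inl b => G.Adj a b
  | Sum.inl a, Sum.inr (Sum.inl b) => G.Adj a b
  | Sum.inr (Sum.inl a), Sum.inl b => G.Adj a b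
  | Sum.inr (Sum.inl _), Sum.inr (Sum.inr _) => True
  | Sum.inr (Sum.inr _), Sum.inr (Sum.inl _) => True
  | _, _ => False

/-- The Mycielski graph of `G`: `Sum.inl v` are original vertices, `Sum.inr (Sum.inl v)`
their copies, and `Sum.inr (Sum.inr ())` is the root. -/
def mycielski {V : Type} (G : SimpleGraph V) : SimpleGraph (MycVert V) where
  Adj := mycAdj G
  symm := by
    constructor
    rintro (a | a | a) (b | b | b) h <;>
      first | exact G.symm h | exact G.adj_symm h | trivial | exact h.elim
  loopless := by
    constructor
    rintro (a | a | a) h <;> first | exact G.loopless a h | exact G.irrefl h | exact h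

def IterMycVert (V : Type) : ℕ → Type
  | 0 => V
  | t + 1 => MycVert (IterMycVert V t)

/-- The `t`-th iterated Mycielski graph. -/
def iterMycielski {V : Type} (G : SimpleGraph V) : (t : ℕ) → SimpleGraph (IterMycVert V t)
  | 0 => G
  | t + 1 => mycielski (iterMycielski G t)

instance iterMycVertFintype (V : Type) [Fintype V] : (t : ℕ) → Fintype (IterMycVert V t)
  | 0 => inferInstanceAs (Fintype V)
  | t + 1 => letI := iterMycVertFintype V t
             inferInstanceAs (Fintype (MycVert (IterMycVert V t)))

/-- `f` is an `L(2,1)`-labeling of `G`. -/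
def IsL21Labeling {V : Type} (G : SimpleGraph V) (f : V → ℕ) : Prop :=
  (∀ x y, G.Adj x y → 2 ≤ ((f x : ℤ) - (f y : ℤ)).natAbs) ∧
  (∀ x y, G.dist x y = 2 → f x ≠ f y)

/-- The `L(2,1)`-labeling number `λ(G)`: the least `k` such that `G` has an
`L(2,1)`-labeling with labels in `{0, …, k}`. -/
noncomputable def lambdaNumber {V : Type} (G : SimpleGraph V) : ℕ :=
  sInf {k | ∃ f : V → ℕ, IsL21Labeling G f ∧ ∀ v, f v ≤ k}


/-- `c` describes an `m`-star matching of `G` covering the vertex set `S`: every component is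
a star `K_{1,i}` with `1 ≤ i ≤ m`, where `c v` is the center of the star containing `v`. -/
def IsStarMatching {V : Type} (G : SimpleGraph V) (m : ℕ) (S : Set V) (c : V → V) : Prop :=
  (∀ v ∈ S, c v ∈ S) ∧
  (∀ v ∈ S, c (c v) = c v) ∧
  (∀ v ∈ S, c v ≠ v → G.Adj v (c v)) ∧
  (∀ v ∈ S, c v = v → ∃ w ∈ S, w ≠ v ∧ c w = v) ∧
  (∀ v ∈ S, Set.ncard {w | w ∈ S ∧ w ≠ v ∧ c w = v} ≤ m)

/-- The `m`-star matching number `s_m(G)`: the maximum order of an `m`-star matching of `G`. -/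
noncomputable def starMatchingNumber {V : Type} [Fintype V] (G : SimpleGraph V) (m : ℕ) : ℕ :=
  sSup {k | ∃ S : Set V, ∃ c : V → V, IsStarMatching G m S c ∧ S.ncard = k}

/-- `i_m(G)`: the number of vertices left unmatched by a maximum `m`-star matching of `G`. -/
noncomputable def unmatchedNumber {V : Type} [Fintype V] (G : SimpleGraph V) (m : ℕ) : ℕ :=
  Fintype.card V - starMatchingNumber G m

/-! Necessity is double counting along the edges of the matching: every vertex of `S` has a
matching neighbour, which lies in `N(S)`, and every vertex is the matching neighbour of at most
`m` vertices. For sufficiency, `A \ N(A)` is independent with neighbourhood inside `N(A) \ A`, so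
`|A| ≤ m |N(A)|` for every `A`, and Hall's theorem lets every vertex choose a neighbour as its
parent with no vertex chosen more than `m` times. While some vertex has a grandparent, one vertex
is turned into a root: a non-root with a childless child if there is one; otherwise the non-roots
with children form cycles in which every vertex has a single child, and a vertex `t` on such a
cycle becomes a root with its old parent rehung below it, so that `t` has at most two children
(this is where `m ≥ 2` is needed). Every move creates a root, so eventually no vertex has a
grandparent, and then the roots and their children are the stars. -/

open Function Set

def SimpleGraph.nbhd {V : Type*} (G : SimpleGraph V) (S : Set V) : Set V :=
  {v | ∃ s ∈ S, G.Adj s v}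

def children {V : Type*} (f : V → V) (v : V) : Set V := {w | w ≠ v ∧ f w = v}

lemma isStarMatching_univ_iff {V : Type} {G : SimpleGraph V} {m : ℕ} {c : V → V} :
    IsStarMatching G m univ c ↔ (∀ v, c (c v) = c v) ∧ (∀ v, c v ≠ v → G.Adj v (c v)) ∧
      (∀ v, c v = v → (children c v).Nonempty) ∧ ∀ v, (children c v).ncard ≤ m := by
  simp [IsStarMatching, children, Set.Nonempty]

lemma ncard_le_mul_ncard_nbhd_of_isStarMatching {V : Type} [Finite V] {G : SimpleGraph V}
    {m : ℕ} {c : V → V} (hc : IsStarMatching G m univ c) (S : Set V) :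
    S.ncard ≤ m * (G.nbhd S).ncard := by
  classical
  obtain ⟨hidem, hadj, hroot, hcard⟩ := isStarMatching_univ_iff.1 hc
  have := Fintype.ofFinite V
  let r : V → V → Prop := fun a b => b ∈ children c a ∨ a ∈ children c b
  have hpartner : ∀ a ∈ S.toFinset, 1 ≤ ((G.nbhd S).toFinset.bipartiteAbove r a).card := by
    intro a ha
    rw [mem_toFinset] at ha
    simp only [Finset.one_le_card, Finset.Nonempty, Finset.mem_bipartiteAbove, mem_toFinset]
    by_cases hca : c a = a
    · obtain ⟨b, hba, hb⟩ := hroot a hca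
      have hab : G.Adj a b := by simpa [hb] using (hadj b (by rwa [hb, ne_comm])).symm
      exact ⟨b, ⟨a, ha, hab⟩, Or.inl ⟨hba, hb⟩⟩
    · exact ⟨c a, ⟨a, ha, hadj a hca⟩, Or.inr ⟨Ne.symm hca, rfl⟩⟩
  have hshare : ∀ b ∈ (G.nbhd S).toFinset, (S.toFinset.bipartiteBelow r b).card ≤ m := by
    intro b _
    rw [← ncard_coe_finset]
    by_cases hcb : c b = b
    · refine (ncard_le_ncard fun a ha => ?_).trans (hcard b)
      obtain ⟨-, ⟨hba, hca⟩ | hab⟩ := (Finset.mem_bipartiteBelow r).1 ha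
      · exact absurd (hcb.symm.trans hca) hba
      · exact hab
    · have hsub : (S.toFinset.bipartiteBelow r b : Set V) ⊆ {c b} := by
        intro a ha
        obtain ⟨-, ⟨-, hca⟩ | ⟨-, hcb'⟩⟩ := (Finset.mem_bipartiteBelow r).1 ha
        · exact hca.symm
        · exact absurd (by rw [← hcb', hidem]) hcb
      calc _ ≤ ({c b} : Set V).ncard := ncard_le_ncard hsub
        _ = 1 := ncard_singleton _
        _ ≤ (children c (c b)).ncard :=
          Nat.one_le_iff_ne_zero.2 (ncard_ne_zero_of_mem (a := b) ⟨Ne.symm hcb, rfl⟩)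
        _ ≤ m := hcard _
  simpa [ncard_eq_toFinset_card', mul_comm] using Finset.card_mul_le_card_mul r hpartner hshare

lemma ncard_le_mul_ncard_nbhd_of_forall_independent {V : Type*} [Finite V] {G : SimpleGraph V}
    {m : ℕ} (hm : 1 ≤ m)
    (h : ∀ S : Set V, (∀ x ∈ S, ∀ y ∈ S, ¬G.Adj x y) → S.ncard ≤ m * (G.nbhd S).ncard)
    (A : Set V) : A.ncard ≤ m * (G.nbhd A).ncard := by
  set N := G.nbhd A
  have hind : ∀ x ∈ A \ N, ∀ y ∈ A \ N, ¬G.Adj x y := fun x hx y hy hxy => hy.2 ⟨x, hx.1, hxy⟩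
  have hsub : G.nbhd (A \ N) ⊆ N \ A := fun z ⟨x, hx, hxz⟩ =>
    ⟨⟨x, hx.1, hxz⟩, fun hz => hx.2 ⟨z, hz, hxz.symm⟩⟩
  calc A.ncard = (A ∩ N).ncard + (A \ N).ncard := (ncard_inter_add_ncard_sdiff_eq_ncard A N).symm
    _ ≤ m * (N ∩ A).ncard + m * (N \ A).ncard := by
      gcongr
      · rw [inter_comm]; exact Nat.le_mul_of_pos_left _ hm
      · exact (h _ hind).trans (Nat.mul_le_mul_left m (ncard_le_ncard hsub))
    _ = m * N.ncard := by rw [← mul_add, ncard_inter_add_ncard_sdiff_eq_ncard]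

lemma exists_adj_ncard_preimage_le {V : Type*} [Finite V] {G : SimpleGraph V} {m : ℕ}
    (h : ∀ A : Set V, A.ncard ≤ m * (G.nbhd A).ncard) :
    ∃ f : V → V, (∀ v, G.Adj v (f v)) ∧ ∀ v, (f ⁻¹' {v}).ncard ≤ m := by
  classical
  have := Fintype.ofFinite V
  -- Hall's theorem for `m` copies of every vertex
  obtain ⟨F, hFinj, hFadj⟩ := (Fintype.all_card_le_filter_rel_iff_exists_injective
    fun v (p : V × Fin m) => G.Adj v p.1).1 fun A => by
      have hA : ({p | ∃ a ∈ A, G.Adj a p.1} : Finset (V × Fin m)) =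
          (G.nbhd A).toFinset ×ˢ Finset.univ := by
        ext p; rw [Finset.mem_product, Set.mem_toFinset]; simp [SimpleGraph.nbhd]
      simpa [hA, ncard_eq_toFinset_card', mul_comm] using h A
  refine ⟨fun v => (F v).1, hFadj, fun v => ?_⟩
  calc _ ≤ (range fun i : Fin m => (v, i)).ncard :=
        ncard_le_ncard_of_injOn F (fun w hw => ⟨(F w).2, Prod.ext hw.symm rfl⟩) hFinj.injOn
    _ = m := by rw [ncard_range_of_injective (fun i j h => (Prod.mk.inj h).2), Nat.card_fin]

/-- `f v` is the parent of `v` and the fixed points of `f` are the roots. A root needs a childless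
child, not just a child, because the moves below only ever detach vertices that have children. -/
structure IsParentMap {V : Type*} (G : SimpleGraph V) (m : ℕ) (f : V → V) : Prop where
  adj : ∀ v, f v ≠ v → G.Adj v (f v)
  exists_childless_child : ∀ v, f v = v → ∃ u ∈ children f v, children f u = ∅
  ncard_children_le : ∀ v, (children f v).ncard ≤ m

section ParentMap

variable {V : Type*} {G : SimpleGraph V} {m : ℕ} {f : V → V} {t : V}

lemma isParentMap_of_adj [Finite V] (hadj : ∀ v, G.Adj v (f v)) (hf : ∀ v, (f ⁻¹' {v}).ncard ≤ m) :
    IsParentMap G m f where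
  adj v _ := hadj v
  exists_childless_child v hv := by simpa [hv] using hadj v
  ncard_children_le v := (ncard_le_ncard fun _ hw => hw.2).trans (hf v)

lemma children_update_self_subset [DecidableEq V] (f : V → V) (t v : V) :
    children (update f t t) v ⊆ children f v := by
  rintro w ⟨hwv, hw⟩
  refine ⟨hwv, ?_⟩
  rcases eq_or_ne w t with rfl | hwt
  · exact absurd (by simpa using hw) hwv
  · rwa [update_of_ne hwt] at hw

lemma children_update_self_self [DecidableEq V] (f : V → V) (t : V) :
    children (update f t t) t = children f t := by
  refine (children_update_self_subset f t t).antisymm fun w ⟨hwt, hw⟩ => ⟨hwt, ?_⟩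
  rwa [update_of_ne hwt]

lemma IsParentMap.update_self [Finite V] [DecidableEq V] (hf : IsParentMap G m f) {u : V}
    (hu : u ∈ children f t) (hu' : children f u = ∅) : IsParentMap G m (update f t t) where
  adj v hv := by
    rcases eq_or_ne v t with rfl | hvt
    · simp at hv
    · rw [update_of_ne hvt] at hv ⊢
      exact hf.adj v hv
  exists_childless_child v hv := by
    rcases eq_or_ne v t with rfl | hvt
    · exact ⟨u, children_update_self_self f v ▸ hu,
        subset_empty_iff.1 (hu' ▸ children_update_self_subset f v u)⟩
    rw [update_of_ne hvt] at hv
    obtain ⟨w, ⟨hwv, hw⟩, hw'⟩ := hf.exists_childless_child v hv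
    have hwt : w ≠ t := by rintro rfl; simp [hw'] at hu
    exact ⟨w, ⟨hwv, by rwa [update_of_ne hwt]⟩,
      subset_empty_iff.1 (hw' ▸ children_update_self_subset f t w)⟩
  ncard_children_le v := (ncard_le_ncard (children_update_self_subset f t v)).trans
    (hf.ncard_children_le v)

lemma fixedPoints_ssubset_update_self [DecidableEq V] (ht : f t ≠ t) :
    fixedPoints f ⊂ fixedPoints (update f t t) := by
  refine ssubset_iff_of_subset (fun v (hv : f v = v) => ?_) |>.2
    ⟨t, show update f t t t = t from update_self t t f, ht⟩
  rcases eq_or_ne v t with rfl | hvt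
  · exact absurd hv ht
  · exact (update_of_ne hvt _ _).trans hv

def reverseParent [DecidableEq V] (f : V → V) (t : V) : V → V := update (update f (f t) t) t t

lemma reverseParent_apply [DecidableEq V] (f : V → V) (t v : V) :
    reverseParent f t v = if v = t ∨ v = f t then t else f v := by
  unfold reverseParent
  rcases eq_or_ne v t with rfl | hvt
  · simp
  rcases eq_or_ne v (f t) with rfl | hvf <;> simp [update, *]

lemma children_reverseParent_subset_of_ne [DecidableEq V] {v : V} (hvt : v ≠ t) :
    children (reverseParent f t) v ⊆ children f v := by
  rintro w ⟨hwv, hw⟩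
  rw [reverseParent_apply] at hw
  split_ifs at hw
  · exact absurd hw.symm hvt
  · exact ⟨hwv, hw⟩

lemma children_reverseParent_self_subset [DecidableEq V] :
    children (reverseParent f t) t ⊆ insert (f t) (children f t) := by
  rintro w ⟨hwt, hw⟩
  rw [reverseParent_apply] at hw
  split_ifs at hw with h
  · exact .inl (h.resolve_left hwt)
  · exact .inr ⟨hwt, hw⟩

lemma IsParentMap.reverseParent [Finite V] [DecidableEq V] (hf : IsParentMap G m f) (hm : 2 ≤ m)
    (ht : f t ≠ t) (hft : f (f t) ≠ f t) (hchild : children f (f t) ⊆ {t})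
    (hchild' : (children f t).ncard ≤ 1) : IsParentMap G m (reverseParent f t) where
  adj v hv := by
    rw [reverseParent_apply] at hv ⊢
    split_ifs at hv ⊢ with h
    · obtain rfl | rfl := h
      · exact absurd rfl hv
      · exact (hf.adj t ht).symm
    · exact hf.adj v hv
  exists_childless_child v hv := by
    rw [reverseParent_apply] at hv
    split_ifs at hv with h
    · subst hv
      refine ⟨f t, ⟨ht, by simp [reverseParent_apply]⟩, subset_empty_iff.1 fun w hw => ?_⟩
      obtain ⟨hwf, hw⟩ := hw
      have := hchild (children_reverseParent_subset_of_ne ht ⟨hwf, hw⟩)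
      subst this
      simp [reverseParent_apply, ht.symm] at hw
    · obtain ⟨u, ⟨huv, hu⟩, hu'⟩ := hf.exists_childless_child v hv
      have hut : u ≠ t := by rintro rfl; exact hft (by rw [hu, hv])
      have huft : u ≠ f t := by
        rintro rfl
        exact (hu' ▸ (⟨ht.symm, rfl⟩ : t ∈ children f (f t)) : t ∈ (∅ : Set V))
      refine ⟨u, ⟨huv, ?_⟩, subset_empty_iff.1 (hu' ▸ children_reverseParent_subset_of_ne hut)⟩
      rw [reverseParent_apply, if_neg (not_or.2 ⟨hut, huft⟩), hu]
  ncard_children_le v := by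
    rcases eq_or_ne v t with rfl | hvt
    · calc _ ≤ (insert (f v) (children f v)).ncard :=
            ncard_le_ncard children_reverseParent_self_subset
        _ ≤ (children f v).ncard + 1 := ncard_insert_le _ _
        _ ≤ m := by omega
    · exact (ncard_le_ncard (children_reverseParent_subset_of_ne hvt)).trans
        (hf.ncard_children_le v)

lemma fixedPoints_ssubset_reverseParent [DecidableEq V] (ht : f t ≠ t) (hft : f (f t) ≠ f t) :
    fixedPoints f ⊂ fixedPoints (reverseParent f t) := by
  refine ssubset_iff_of_subset (fun v (hv : f v = v) => ?_) |>.2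
    ⟨t, show reverseParent f t t = t by simp [reverseParent_apply], ht⟩
  have hvt : v ≠ t := by rintro rfl; exact ht hv
  have hvft : v ≠ f t := by rintro rfl; exact hft hv
  show reverseParent f t v = v
  rw [reverseParent_apply, if_neg (not_or.2 ⟨hvt, hvft⟩), hv]

lemma subsingleton_children_of_children_subset [Finite V] {N : Set V}
    (hN : ∀ t ∈ N, (children f t).Nonempty ∧ children f t ⊆ N) (ht : t ∈ N) :
    (children f t).Subsingleton := by
  set D := N ∩ f ⁻¹' N
  have hsurj : N ⊆ f '' D := fun s hs => by
    obtain ⟨u, hu⟩ := (hN s hs).1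
    exact ⟨u, ⟨(hN s hs).2 hu, by rwa [mem_preimage, hu.2]⟩, hu.2⟩
  have hinj : InjOn f D := injOn_of_ncard_image_eq <| (ncard_image_le).antisymm <|
    (ncard_le_ncard inter_subset_left).trans (ncard_le_ncard hsurj)
  intro u hu u' hu'
  have hD : ∀ w ∈ children f t, w ∈ D := fun w hw =>
    ⟨(hN t ht).2 hw, by rwa [mem_preimage, hw.2]⟩
  exact hinj (hD u hu) (hD u' hu') (hu.2.trans hu'.2.symm)

lemma IsParentMap.exists_fixedPoints_ssubset [Finite V] [DecidableEq V] (hf : IsParentMap G m f)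
    (hm : 2 ≤ m) {v : V} (hv : f (f v) ≠ f v) :
    ∃ g, IsParentMap G m g ∧ fixedPoints f ⊂ fixedPoints g := by
  have hv' : f v ≠ v := fun h => hv (by rw [h, h])
  by_cases hleaf : ∃ t u, f t ≠ t ∧ u ∈ children f t ∧ children f u = ∅
  · obtain ⟨t, u, ht, hu, hu'⟩ := hleaf
    exact ⟨_, hf.update_self hu hu', fixedPoints_ssubset_update_self ht⟩
  -- Otherwise `f` permutes the non-roots with children in cycles, each having a single child.
  simp only [not_exists, not_and, ← nonempty_iff_ne_empty] at hleaf
  set N := {t | f t ≠ t ∧ (children f t).Nonempty}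
  have hN : ∀ t ∈ N, (children f t).Nonempty ∧ children f t ⊆ N := fun t ht =>
    ⟨ht.2, fun u hu => ⟨hu.2 ▸ hu.1.symm, hleaf t u ht.1 hu⟩⟩
  have hvN : v ∈ N := ⟨hv', hleaf (f v) v hv ⟨hv'.symm, rfl⟩⟩
  have hfvN : f v ∈ N := ⟨hv, v, hv'.symm, rfl⟩
  refine ⟨_, hf.reverseParent hm hv' hv ?_ ?_, fixedPoints_ssubset_reverseParent hv' hv⟩
  · exact (subsingleton_children_of_children_subset hN hfvN).eq_singleton_of_mem
      ⟨hv'.symm, rfl⟩ |>.le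
  · exact (ncard_le_one_iff_subsingleton).2 (subsingleton_children_of_children_subset hN hvN)

lemma IsParentMap.exists_idempotent [Finite V] [DecidableEq V] (hf : IsParentMap G m f)
    (hm : 2 ≤ m) :
    ∃ c, IsParentMap G m c ∧ ∀ v, c (c v) = c v := by
  induction h : (fixedPoints f)ᶜ.ncard using Nat.strong_induction_on generalizing f with
  | _ n ih =>
  by_cases hc : ∀ v, f (f v) = f v
  · exact ⟨f, hf, hc⟩
  obtain ⟨v, hv⟩ := not_forall.1 hc
  obtain ⟨g, hg, hfg⟩ := hf.exists_fixedPoints_ssubset hm hv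
  exact ih _ (h ▸ ncard_lt_ncard (compl_lt_compl_iff_lt.2 hfg)) hg rfl

end ParentMap

/-- A graph `G` has a perfect `m`-star matching iff for every independent set `S` of `G`,
`|N_G(S)| ≥ |S| / m` (equivalently `|S| ≤ m * |N_G(S)|`). -/
theorem perfect_starMatching_iff {V : Type} [Fintype V] (G : SimpleGraph V) (m : ℕ)
    (hm : 2 ≤ m) :
    (∃ c : V → V, IsStarMatching G m Set.univ c) ↔
      ∀ S : Set V, (∀ x ∈ S, ∀ y ∈ S, ¬G.Adj x y) →
        S.ncard ≤ m * Set.ncard {v | ∃ s ∈ S, G.Adj s v} := by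
  classical
  refine ⟨fun ⟨c, hc⟩ S _ => ncard_le_mul_ncard_nbhd_of_isStarMatching hc S, fun h => ?_⟩
  obtain ⟨f, hadj, hfiber⟩ :=
    exists_adj_ncard_preimage_le (ncard_le_mul_ncard_nbhd_of_forall_independent (by omega) h)
  obtain ⟨c, hc, hidem⟩ := (isParentMap_of_adj hadj hfiber).exists_idempotent hm
  refine ⟨c, isStarMatching_univ_iff.2 ⟨hidem, hc.adj, fun v hv => ?_, hc.ncard_children_le⟩⟩
  obtain ⟨u, hu, -⟩ := hc.exists_childless_child v hv
  exact ⟨u, hu⟩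
end

section
/- Let G be a graph of order n with maximum degree Δ ≤ n - 2 and minimum degree δ. If 3(n-1) + δ ≥ 4Δ, then λ(M(G)) ≤ 2n. -/
open SimpleGraph

/-!
Numbering the vertices of `M(G)` along a Hamiltonian path of its complement is an
`L(2,1)`-labelling with labels `0, …, 2n`. Such a path exists once `V` is partitioned into stars of
`Gᶜ` with at most four leaves: each star yields a path through the original and the copy of each of
its vertices, starting and ending at copies, which are pairwise non-adjacent in `M(G)`; the root is
put next to an original vertex. The degree condition says `1 ≤ δ(Gᶜ)` and `Δ(Gᶜ) ≤ 4 δ(Gᶜ)`, so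
double counting and Hall's theorem give a map `φ` to `Gᶜ`-neighbours whose fibres have at most four
elements, and the functional graph of such a map can be cut into stars with at most four leaves.
-/

section Labeling

variable {W : Type} (H : SimpleGraph W)

theorem lambdaNumber_le {f : W → ℕ} {k : ℕ} (hf : IsL21Labeling H f) (hk : ∀ v, f v ≤ k) :
    lambdaNumber H ≤ k :=
  Nat.sInf_le ⟨f, hf, hk⟩

theorem isL21Labeling_of_injective {f : W → ℕ} (hf : f.Injective)
    (hadj : ∀ x y, H.Adj x y → f y ≠ f x + 1) : IsL21Labeling H f := by
  refine ⟨fun x y hxy => ?_, fun x y hxy heq => ?_⟩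
  · have hne : f x ≠ f y := hf.ne (H.ne_of_adj hxy)
    have h₁ := hadj x y hxy
    have h₂ := hadj y x hxy.symm
    omega
  · rw [hf heq, SimpleGraph.dist_self] at hxy
    omega

theorem lambdaNumber_le_of_isChain (l : List W) (hl : ∀ x, x ∈ l)
    (hc : l.IsChain fun a b => ¬ H.Adj a b) : lambdaNumber H ≤ l.length - 1 := by
  classical
  have hlt (x : W) : l.idxOf x < l.length := List.idxOf_lt_length_iff.2 (hl x)
  refine lambdaNumber_le H (f := l.idxOf) (isL21Labeling_of_injective H ?_ ?_) ?_
  · intro x y hxy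
    exact (List.idxOf_inj (hl x)).1 hxy
  · intro x y hxy hidx
    have := List.isChain_iff_getElem.1 hc (l.idxOf x) (by have := hlt y; omega)
    simp only [List.getElem_idxOf, ← hidx] at this
    exact this hxy
  · intro v
    have := hlt v
    omega

end Labeling

theorem List.isChain_flatMap_of_forall_rel {α β : Type*} {R : β → β → Prop} {p : β → Prop}
    (hR : ∀ x y, p x → p y → R x y) {f : α → List β} :
    ∀ {L : List α}, (∀ a ∈ L, (f a).IsChain R ∧ (∀ x ∈ (f a).head?, p x) ∧
      ∀ x ∈ (f a).getLast?, p x) →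
    (L.flatMap f).IsChain R ∧ (∀ x ∈ (L.flatMap f).head?, p x) ∧
      ∀ x ∈ (L.flatMap f).getLast?, p x
  | [], _ => by simp
  | a :: L, h => by
    obtain ⟨hc, hh, hl⟩ := h a List.mem_cons_self
    obtain ⟨ihc, ihh, ihl⟩ := isChain_flatMap_of_forall_rel hR fun b hb => h b (.tail _ hb)
    rw [List.flatMap_cons, List.head?_append, List.getLast?_append]
    refine ⟨hc.append ihc fun x hx y hy => hR x y (hl x hx) (ihh y hy), fun x hx => ?_,
      fun x hx => ?_⟩
    · cases hfa : (f a).head? <;> simp_all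
    · cases hL : (L.flatMap f).getLast? <;> simp_all

section Hall

open Finset

/-- Hall's theorem with capacity `k`, obtained from the classical one for `t i ×ˢ Fin k`. -/
theorem exists_mem_card_fiber_le {ι α : Type*} [Fintype ι] [DecidableEq α] (t : ι → Finset α)
    (k : ℕ) (ht : ∀ s : Finset ι, #s ≤ k * #(s.biUnion t)) :
    ∃ f : ι → α, (∀ i, f i ∈ t i) ∧ ∀ a, #{i | f i = a} ≤ k := by
  have hall (s : Finset ι) : #s ≤ #(s.biUnion fun i => t i ×ˢ (univ : Finset (Fin k))) := by
    have hprod : (s.biUnion fun i => t i ×ˢ (univ : Finset (Fin k))) = s.biUnion t ×ˢ univ := by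
      ext; simp
    rw [hprod, card_product, card_univ, Fintype.card_fin, mul_comm]
    exact ht s
  obtain ⟨f, hinj, hf⟩ := (all_card_le_biUnion_card_iff_exists_injective _).1 hall
  refine ⟨fun i => (f i).1, fun i => (mem_product.1 (hf i)).1, fun a => ?_⟩
  calc #{i | (f i).1 = a} ≤ #(univ : Finset (Fin k)) := by
        refine card_le_card_of_injOn (fun i => (f i).2) (fun _ _ => mem_univ _) ?_
        intro i hi j hj hij
        simp only [coe_filter, mem_univ, true_and] at hi hj
        exact hinj (Prod.ext (hi.trans hj.symm) hij)
    _ = k := by simp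

/-- Double counting the edges between `S` and its neighbourhood gives Hall's condition with
capacity `k`. -/
theorem exists_adj_card_fiber_le {V : Type*} [Fintype V] [DecidableEq V] (F : SimpleGraph V)
    [DecidableRel F.Adj] {d k : ℕ} (hd : 0 < d) (hlow : ∀ v, d ≤ F.degree v)
    (hhigh : ∀ v, F.degree v ≤ k * d) :
    ∃ φ : V → V, (∀ v, F.Adj v (φ v)) ∧ ∀ c, #{v | φ v = c} ≤ k := by
  obtain ⟨φ, hφ, hfib⟩ := exists_mem_card_fiber_le (F.neighborFinset ·) k fun S => by
    set N := S.biUnion (F.neighborFinset ·)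
    have hcount : #S * d ≤ #N * (k * d) := by
      refine card_mul_le_card_mul F.Adj (fun a ha => ?_) (fun b _ => ?_)
      · refine (F.card_neighborFinset_eq_degree a ▸ hlow a).trans (card_le_card fun b hb => ?_)
        rw [mem_bipartiteAbove]
        exact ⟨mem_biUnion.2 ⟨a, ha, hb⟩, (F.mem_neighborFinset a b).1 hb⟩
      · refine le_trans (card_le_card fun a ha => ?_) (F.card_neighborFinset_eq_degree b ▸ hhigh b)
        rw [mem_bipartiteBelow] at ha
        exact (F.mem_neighborFinset b a).2 ha.2.symm
    rw [← mul_assoc, mul_comm #N] at hcount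
    exact Nat.le_of_mul_le_mul_right hcount hd
  exact ⟨φ, fun v => (F.mem_neighborFinset v _).1 (hφ v), hfib⟩

end Hall

section StarPartition

variable {V : Type*} (F : SimpleGraph V) (k : ℕ)

def IsStar (s : V × List V) : Prop :=
  s.2 ≠ [] ∧ s.2.length ≤ k ∧ ∀ l ∈ s.2, F.Adj s.1 l

def starVertices (L : List (V × List V)) : List V :=
  L.flatMap fun s => s.1 :: s.2

/-- A perfect `k`-star matching of `F` on `A`. -/
def IsStarPartition (L : List (V × List V)) (A : Finset V) : Prop :=
  (∀ s ∈ L, IsStar F k s) ∧ (starVertices L : Multiset V) = A.val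

variable {F k}

theorem IsStarPartition.append [DecidableEq V] {L₁ L₂ : List (V × List V)} {S A : Finset V}
    (h₁ : IsStarPartition F k L₁ S) (h₂ : IsStarPartition F k L₂ (A \ S)) (hS : S ⊆ A) :
    IsStarPartition F k (L₁ ++ L₂) A := by
  refine ⟨fun s hs => (List.mem_append.1 hs).elim (h₁.1 s) (h₂.1 s), ?_⟩
  rw [starVertices, List.flatMap_append, ← Multiset.coe_add, ← starVertices, ← starVertices,
    h₁.2, h₂.2, Finset.sdiff_val, add_tsub_cancel_of_le (Finset.val_le_iff.2 hS)]

variable (φ : V → V) (P : V → List V)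

/-- A `φ`-path `x₁ → x₂ → ⋯` whose vertices carry pendant lists `P xᵢ` can be cut into stars
unless it starts badly: with a bare vertex that is alone or followed by a vertex with pendants. -/
def StartsWell : List V → Prop
  | [] => True
  | [x] => P x ≠ []
  | x :: y :: _ => P x ≠ [] ∨ P y = []

theorem startsWell_cons {y : V} (hy : P y ≠ []) (ys : List V) : StartsWell P (y :: ys) := by
  cases ys with
  | nil => exact hy
  | cons _ _ => exact Or.inl hy

theorem startsWell_of_not_startsWell {xs : List V} (h : ¬ StartsWell P xs) :
    ∃ y ys, xs = y :: ys ∧ P y = [] ∧ StartsWell P ys := by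
  match xs, h with
  | [], h => exact absurd trivial h
  | [y], h => exact ⟨y, [], rfl, not_not.1 h, trivial⟩
  | y :: z :: zs, h =>
    simp only [StartsWell, not_or, not_not] at h
    exact ⟨y, z :: zs, rfl, h.1, startsWell_cons P h.2 zs⟩

theorem exists_isStar_prefix (hk : 2 ≤ k) (hφ : ∀ v, F.Adj v (φ v))
    (hP : ∀ x, ∀ p ∈ P x, φ p = x) {x : V} {xs : List V}
    (hc : (x :: xs).IsChain (fun a b => φ a = b)) (hPk : (P x).length < k)
    (hs : StartsWell P (x :: xs)) :
    ∃ s pre ys, x :: xs = pre ++ ys ∧ pre ≠ [] ∧ IsStar F k s ∧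
      (s.1 :: s.2).Perm (pre.flatMap fun y => y :: P y) ∧ StartsWell P ys := by
  have hpend : ∀ p ∈ P x, F.Adj x p := fun p hp => hP x p hp ▸ (hφ p).symm
  by_cases hx : P x = []
  · obtain ⟨y, r, rfl⟩ : ∃ y r, xs = y :: r := by
      cases xs with
      | nil => exact absurd hx hs
      | cons y r => exact ⟨y, r, rfl⟩
    have hy : P y = [] := hs.resolve_left (not_not.2 hx)
    obtain ⟨rfl, hc⟩ := List.isChain_cons_cons.1 hc
    by_cases hr : StartsWell P r
    · exact ⟨(x, [φ x]), [x, φ x], r, rfl, by simp, ⟨by simp, by simp; omega, by simpa using hφ x⟩,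
        by simp [hx, hy], hr⟩
    · obtain ⟨z, zs, rfl, hz, hzs⟩ := startsWell_of_not_startsWell P hr
      obtain ⟨rfl, -⟩ := List.isChain_cons_cons.1 hc
      refine ⟨(φ x, [x, φ (φ x)]), [x, φ x, φ (φ x)], zs, rfl, by simp,
        ⟨by simp, by simpa using hk, by simpa using ⟨(hφ x).symm, hφ (φ x)⟩⟩, ?_, hzs⟩
      simpa [hx, hy, hz] using List.Perm.swap x (φ x) [φ (φ x)]
  · by_cases hxs : StartsWell P xs
    · exact ⟨(x, P x), [x], xs, rfl, by simp, ⟨hx, hPk.le, hpend⟩, by simp, hxs⟩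
    · obtain ⟨y, ys, rfl, hy, hys⟩ := startsWell_of_not_startsWell P hxs
      obtain ⟨rfl, -⟩ := List.isChain_cons_cons.1 hc
      refine ⟨(x, P x ++ [φ x]), [x, φ x], ys, rfl, by simp, ⟨by simp, by simpa using hPk, ?_⟩,
        by simp [hy], hys⟩
      intro l hl
      rcases List.mem_append.1 hl with hl | hl
      · exact hpend l hl
      · exact List.mem_singleton.1 hl ▸ hφ x

theorem exists_stars_of_isChain (hk : 2 ≤ k) (hφ : ∀ v, F.Adj v (φ v))
    (hP : ∀ x, ∀ p ∈ P x, φ p = x) :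
    ∀ xs : List V, xs.IsChain (fun a b => φ a = b) → (∀ x ∈ xs, (P x).length < k) →
      StartsWell P xs → ∃ L : List (V × List V), (∀ s ∈ L, IsStar F k s) ∧
        (starVertices L).Perm (xs.flatMap fun x => x :: P x)
  | [], _, _, _ => ⟨[], by simp, by simp [starVertices]⟩
  | x :: xs, hc, hPk, hs => by
    obtain ⟨s, pre, ys, hxs, hpre, hstar, hperm, hys⟩ :=
      exists_isStar_prefix φ P hk hφ hP hc (hPk x List.mem_cons_self) hs
    have : ys.length < xs.length + 1 := by
      have hlen := congrArg List.length hxs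
      rw [List.length_cons, List.length_append] at hlen
      have := List.length_pos_of_ne_nil hpre
      omega
    rw [hxs] at hc hPk ⊢
    obtain ⟨L, hL, hLperm⟩ := exists_stars_of_isChain hk hφ hP ys hc.right_of_append
      (fun y hy => hPk y (List.mem_append_right _ hy)) hys
    refine ⟨s :: L, List.forall_mem_cons.2 ⟨hstar, hL⟩, ?_⟩
    simpa [starVertices] using hperm.append hLperm
  termination_by xs => xs.length

/-- On a cycle a good start always exists: if `x → y → ⋯` starts badly, `y → ⋯ → x` does not. -/
theorem exists_stars_of_cycle_chain (hk : 2 ≤ k) (hφ : ∀ v, F.Adj v (φ v))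
    (hP : ∀ x, ∀ p ∈ P x, φ p = x) (l : List V) (hl : 2 ≤ l.length)
    (hc : (l : Cycle V).Chain (fun a b => φ a = b)) (hPk : ∀ x ∈ l, (P x).length < k) :
    ∃ L : List (V × List V), (∀ s ∈ L, IsStar F k s) ∧
      (starVertices L).Perm (l.flatMap fun x => x :: P x) := by
  obtain ⟨x, y, r, rfl⟩ : ∃ x y r, l = x :: y :: r := by
    match l, hl with
    | x :: y :: r, _ => exact ⟨x, y, r, rfl⟩
  by_cases hs : StartsWell P (x :: y :: r)
  · exact exists_stars_of_isChain φ P hk hφ hP _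
      ((Cycle.chain_coe_cons _ _ _).1 hc).left_of_append hPk hs
  · simp only [StartsWell, not_or, not_not] at hs
    have hrot : ((y :: (r ++ [x]) : List V) : Cycle V) = (x :: y :: r : List V) :=
      Cycle.coe_eq_coe.2 ⟨r.length + 1, by simp⟩
    rw [← hrot, Cycle.chain_coe_cons] at hc
    have hperm : (y :: (r ++ [x])).Perm (x :: y :: r) := List.perm_append_singleton x (y :: r)
    obtain ⟨L, hL, hLperm⟩ := exists_stars_of_isChain φ P hk hφ hP _ hc.left_of_append
      (fun z hz => hPk z (hperm.subset hz)) (startsWell_cons P hs.2 _)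
    exact ⟨L, hL, hLperm.trans (hperm.flatMap_right _)⟩

end StarPartition

section Orbits

open Finset Function

theorem exists_mem_periodicPts_of_mapsTo {α : Type*} {f : α → α} {A : Finset α}
    (hA : Set.MapsTo f A A) {a : α} (ha : a ∈ A) : ∃ b ∈ A, b ∈ periodicPts f := by
  have hmaps : ∀ i ∈ range (#A + 1), f^[i] a ∈ A := fun i _ => hA.iterate i ha
  obtain ⟨i, -, j, -, hij, heq⟩ := exists_ne_map_eq_of_card_lt_of_maps_to (by simp) hmaps
  wlog hlt : i < j generalizing i j
  · exact this j i hij.symm heq.symm (by omega)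
  refine ⟨f^[i] a, hA.iterate i ha, mk_mem_periodicPts (n := j - i) (by omega) ?_⟩
  change f^[j - i] (f^[i] a) = f^[i] a
  rw [← iterate_add_apply, Nat.sub_add_cancel hlt.le, heq]

theorem exists_list_periodicOrbit {α : Type*} {f : α → α} {x : α} (hx : x ∈ periodicPts f)
    (hfx : f x ≠ x) : ∃ l : List α, l.Nodup ∧ 2 ≤ l.length ∧
      (l : Cycle α).Chain (fun a b => f a = b) ∧ (∀ y, y ∈ l ↔ ∃ n, f^[n] x = y) ∧
      (∀ y ∈ l, f y ∈ l) ∧ ∀ y ∈ l, ∃ z ∈ l, f z = y := by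
  have hmem (y : α) : y ∈ periodicOrbit f x ↔ ∃ n, f^[n] x = y := mem_periodicOrbit_iff hx
  have hpos := minimalPeriod_pos_of_mem_periodicPts hx
  have hne : minimalPeriod f x ≠ 1 := fun h => hfx (minimalPeriod_eq_one_iff_isFixedPt.1 h)
  refine ⟨(List.range (minimalPeriod f x)).map (f^[·] x), Cycle.nodup_coe_iff.1 nodup_periodicOrbit,
    by simp; omega, (periodicOrbit_chain' _ hx).2 fun n => (iterate_succ_apply' f n x).symm,
    hmem, fun y hy => ?_, fun y hy => ?_⟩
  · obtain ⟨n, rfl⟩ := (hmem y).1 hy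
    exact (hmem _).2 ⟨n + 1, iterate_succ_apply' f n x⟩
  · obtain ⟨n, rfl⟩ := (hmem y).1 hy
    refine ⟨f^[n + (minimalPeriod f x - 1)] x, (hmem _).2 ⟨_, rfl⟩, ?_⟩
    rw [← iterate_succ_apply' f, Nat.succ_eq_add_one, add_assoc, Nat.sub_add_cancel hpos,
      iterate_add_minimalPeriod_eq]

end Orbits

section Decomposition

open Finset Function

variable {V : Type*} [DecidableEq V] {F : SimpleGraph V} {k : ℕ} {φ : V → V}

theorem exists_starPartition_of_sources (hφ : ∀ v, F.Adj v (φ v)) {A : Finset V}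
    (hA : Set.MapsTo φ A A) (hfib : ∀ c, #{a ∈ A | φ a = c} ≤ k) {c : V} (hc : c ∈ A)
    (hne : {a ∈ A | φ a = c}.Nonempty) (hsrc : ∀ x ∈ A, φ x = c → ∀ y ∈ A, φ y ≠ x) :
    ∃ S ⊆ A, S.Nonempty ∧ Set.MapsTo φ ↑(A \ S) ↑(A \ S) ∧ ∃ L, IsStarPartition F k L S := by
  set T := {a ∈ A | φ a = c}
  have hcT : c ∉ T := fun h => (hφ c).ne (mem_filter.1 h).2.symm
  refine ⟨insert c T, insert_subset hc (filter_subset _ _), insert_nonempty _ _, ?_,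
    [(c, T.toList)], ?_, ?_⟩
  · intro a ha
    simp only [coe_sdiff, Set.mem_sdiff, mem_coe, mem_insert, not_or, T, mem_filter] at ha ⊢
    refine ⟨hA ha.1, fun h => ha.2.2 ⟨ha.1, h⟩, fun h => hsrc _ h.1 h.2 a ha.1 rfl⟩
  · simp only [List.mem_singleton, forall_eq, IsStar, ne_eq, toList_eq_nil, length_toList,
      mem_toList]
    refine ⟨hne.ne_empty, hfib c, fun l hl => ?_⟩
    rw [← (mem_filter.1 hl).2]
    exact (hφ l).symm
  · simp [starVertices, insert_val_of_notMem hcT, ← Multiset.cons_coe]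

theorem exists_starPartition_orbit (hk : 2 ≤ k) (hφ : ∀ v, F.Adj v (φ v)) {A : Finset V}
    (hfib : ∀ c, #{a ∈ A | φ a = c} ≤ k) {l : List V} (hnd : l.Nodup) (hlen : 2 ≤ l.length)
    (hc : (l : Cycle V).Chain (fun a b => φ a = b)) (hlA : ∀ x ∈ l, x ∈ A)
    (hsucc : ∀ x ∈ l, φ x ∈ l) (hpred : ∀ y ∈ l, ∃ z ∈ l, φ z = y) :
    ∃ L, IsStarPartition F k L {a ∈ A | φ a ∈ l} := by
  set P : V → List V := fun x => {a ∈ A | φ a = x ∧ a ∉ l}.toList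
  have hP (x p) (hp : p ∈ P x) : φ p = x ∧ p ∉ l := (mem_filter.1 (mem_toList.1 hp)).2
  have hPk : ∀ x ∈ l, (P x).length < k := by
    intro x hx
    obtain ⟨z, hz, hzx⟩ := hpred x hx
    rw [length_toList]
    refine (card_lt_card ((ssubset_iff_of_subset ?_).2 ⟨z, ?_, ?_⟩)).trans_le (hfib x)
    · exact fun a ha => mem_filter.2 ⟨(mem_filter.1 ha).1, (mem_filter.1 ha).2.1⟩
    · exact mem_filter.2 ⟨hlA z hz, hzx⟩
    · exact fun h => (mem_filter.1 h).2.2 hz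
  obtain ⟨L, hL, hperm⟩ := exists_stars_of_cycle_chain φ P hk hφ (fun x p hp => (hP x p hp).1)
    l hlen hc hPk
  refine ⟨L, hL, (Multiset.coe_eq_coe.2 hperm).trans ((Multiset.Nodup.ext ?_ (nodup _)).2 ?_)⟩
  · refine Multiset.coe_nodup.2 (List.nodup_flatMap.2 ⟨fun x hx => ?_, ?_⟩)
    · exact List.nodup_cons.2 ⟨fun h => (hP x x h).2 hx, nodup_toList _⟩
    refine hnd.pairwise_of_forall_ne fun x hx y hy hxy z hzx hzy => ?_
    rcases List.mem_cons.1 hzx with rfl | hzx <;> rcases List.mem_cons.1 hzy with rfl | hzy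
    · exact hxy rfl
    · exact (hP y z hzy).2 hx
    · exact (hP x z hzx).2 hy
    · exact hxy ((hP x z hzx).1.symm.trans (hP y z hzy).1)
  · intro z
    simp only [Multiset.mem_coe, List.mem_flatMap, List.mem_cons, mem_val, mem_filter, P,
      mem_toList]
    constructor
    · rintro ⟨x, hx, rfl | ⟨hz, rfl, -⟩⟩
      · exact ⟨hlA z hx, hsucc z hx⟩
      · exact ⟨hz, hx⟩
    · rintro ⟨hz, hφz⟩
      by_cases hzl : z ∈ l
      · exact ⟨z, hzl, Or.inl rfl⟩
      · exact ⟨φ z, hφz, Or.inr ⟨hz, rfl, hzl⟩⟩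

/-- Either some vertex has only sources as preimages, and splits off with them as a star, or the
non-sources form cycles of `φ`, and a cycle splits off with the sources hanging on it. -/
theorem exists_starPartition_splitting (hk : 2 ≤ k) (hφ : ∀ v, F.Adj v (φ v)) {A : Finset V}
    (hA : Set.MapsTo φ A A) (hfib : ∀ c, #{a ∈ A | φ a = c} ≤ k) (hne : A.Nonempty) :
    ∃ S ⊆ A, S.Nonempty ∧ Set.MapsTo φ ↑(A \ S) ↑(A \ S) ∧ ∃ L, IsStarPartition F k L S := by
  by_cases hsrc : ∃ c ∈ A, {a ∈ A | φ a = c}.Nonempty ∧ ∀ x ∈ A, φ x = c → ∀ y ∈ A, φ y ≠ x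
  · obtain ⟨c, hc, hcne, hsrc⟩ := hsrc
    exact exists_starPartition_of_sources hφ hA hfib hc hcne hsrc
  push Not at hsrc
  set NS := {c ∈ A | ∃ x ∈ A, φ x = c}
  have hinj : Set.InjOn φ NS := by
    refine injOn_of_surjOn_of_card_le φ (fun x hx => ?_) (fun c hc => ?_) le_rfl
    · exact mem_filter.2 ⟨hA (mem_filter.1 hx).1, x, (mem_filter.1 hx).1, rfl⟩
    · obtain ⟨hcA, x, hxA, hxc⟩ := mem_filter.1 hc
      obtain ⟨y, hy, hyc, z, hz, hzy⟩ := hsrc c hcA ⟨x, mem_filter.2 ⟨hxA, hxc⟩⟩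
      exact ⟨y, mem_filter.2 ⟨hy, z, hz, hzy⟩, hyc⟩
  obtain ⟨a, ha⟩ := hne
  obtain ⟨a₀, ha₀A, ha₀⟩ := exists_mem_periodicPts_of_mapsTo hA ha
  obtain ⟨l, hnd, hlen, hc, hmem, hsucc, hpred⟩ := exists_list_periodicOrbit ha₀ (hφ a₀).ne'
  have hlA : ∀ x ∈ l, x ∈ A := fun x hx => by
    obtain ⟨n, rfl⟩ := (hmem x).1 hx
    exact hA.iterate n ha₀A
  have ha₀l : a₀ ∈ l := (hmem a₀).2 ⟨0, rfl⟩
  refine ⟨{a ∈ A | φ a ∈ l}, filter_subset _ _, ⟨a₀, mem_filter.2 ⟨ha₀A, hsucc a₀ ha₀l⟩⟩,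
    fun b hb => ?_, exists_starPartition_orbit hk hφ hfib hnd hlen hc hlA hsucc hpred⟩
  simp only [coe_sdiff, Set.mem_sdiff, mem_coe, mem_filter, not_and] at hb ⊢
  refine ⟨hA hb.1, fun _ hφb => hb.2 hb.1 ?_⟩
  obtain ⟨q, hq, hqb⟩ := hpred _ hφb
  obtain ⟨p, hp, hpq⟩ := hpred q hq
  have hqNS : q ∈ NS := mem_filter.2 ⟨hlA q hq, p, hlA p hp, hpq⟩
  have hbNS : φ b ∈ NS := mem_filter.2 ⟨hA hb.1, b, hb.1, rfl⟩
  exact hinj hqNS hbNS hqb ▸ hq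

theorem exists_isStarPartition (hk : 2 ≤ k) (hφ : ∀ v, F.Adj v (φ v)) (A : Finset V)
    (hA : Set.MapsTo φ A A) (hfib : ∀ c, #{a ∈ A | φ a = c} ≤ k) :
    ∃ L, IsStarPartition F k L A := by
  induction A using Finset.strongInduction with
  | H A ih =>
    rcases A.eq_empty_or_nonempty with rfl | hne
    · exact ⟨[], by simp, by simp [starVertices]⟩
    obtain ⟨S, hSA, hSne, hrest, L₁, hL₁⟩ := exists_starPartition_splitting hk hφ hA hfib hne
    obtain ⟨L₂, hL₂⟩ := ih (A \ S) (sdiff_ssubset hSA hSne) hrest fun c =>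
      (card_le_card (filter_subset_filter _ sdiff_subset)).trans (hfib c)
    exact ⟨L₁ ++ L₂, hL₁.append hL₂ hSA⟩

end Decomposition

namespace MycVert

variable {V : Type}

def orig (v : V) : MycVert V := Sum.inl v

def copy (v : V) : MycVert V := Sum.inr (Sum.inl v)

def root : MycVert V := Sum.inr (Sum.inr ())

end MycVert

section MycielskiWalk

open MycVert

variable {V : Type} (G : SimpleGraph V)

@[simp]
theorem mycielski_adj_orig_orig {a b : V} : (mycielski G).Adj (orig a) (orig b) ↔ G.Adj a b :=
  Iff.rfl

@[simp]
theorem mycielski_adj_orig_copy {a b : V} : (mycielski G).Adj (orig a) (copy b) ↔ G.Adj a b :=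
  Iff.rfl

@[simp]
theorem mycielski_adj_copy_orig {a b : V} : (mycielski G).Adj (copy a) (orig b) ↔ G.Adj a b :=
  Iff.rfl

@[simp]
theorem mycielski_not_adj_copy_copy {a b : V} : ¬ (mycielski G).Adj (copy a) (copy b) :=
  id

@[simp]
theorem mycielski_not_adj_root_orig {a : V} : ¬ (mycielski G).Adj root (orig a) :=
  id

@[simp]
theorem mycielski_not_adj_orig_root {a : V} : ¬ (mycielski G).Adj (orig a) root :=
  id

/-- A path in the complement of `mycielski G` through both copies of a star of `Gᶜ`, from a copy
to a copy. Besides its own copy, a leaf `a` can only be next to `orig c` or `copy c`, which have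
two free neighbours each: hence at most four leaves. -/
def starWalk (c : V) : List V → List (MycVert V)
  | [a] => [copy a, orig a, orig c, copy c]
  | [a, b] => [copy a, orig a, orig c, orig b, copy b, copy c]
  | [a, b, d] => [copy a, orig a, orig c, orig b, copy b, copy d, orig d, copy c]
  | [a, b, d, e] => [copy a, orig a, orig c, orig b, copy b, copy d, orig d, copy c, orig e, copy e]
  | _ => []

theorem starWalk_spec {c : V} {ls : List V} (h : IsStar Gᶜ 4 (c, ls)) :
    (starWalk c ls).IsChain (fun x y => ¬ (mycielski G).Adj x y) ∧
    (starWalk c ls).length = 2 * (ls.length + 1) ∧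
    (∀ v ∈ c :: ls, orig v ∈ starWalk c ls ∧ copy v ∈ starWalk c ls) ∧
    ∃ a r b, starWalk c ls = copy a :: orig a :: (r ++ [copy b]) := by
  obtain ⟨hne, hlen, hadj⟩ := h
  simp only [SimpleGraph.compl_adj] at hadj
  match ls, hne, hlen with
  | [a], _, _ =>
    refine ⟨?_, rfl, ?_, a, [orig c], c, rfl⟩ <;> simp_all [starWalk, G.adj_comm]
  | [a, b], _, _ =>
    refine ⟨?_, rfl, ?_, a, [orig c, orig b, copy b], c, rfl⟩ <;> simp_all [starWalk, G.adj_comm]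
  | [a, b, d], _, _ =>
    refine ⟨?_, rfl, ?_, a, [orig c, orig b, copy b, copy d, orig d], c, rfl⟩ <;>
      simp_all [starWalk, G.adj_comm]
  | [a, b, d, e], _, _ =>
    refine ⟨?_, rfl, ?_, a, [orig c, orig b, copy b, copy d, orig d, copy c, orig e], e, rfl⟩ <;>
      simp_all [starWalk, G.adj_comm]
  | _ :: _ :: _ :: _ :: _ :: _, _, hlen => simp at hlen; omega

end MycielskiWalk

section MycielskiLabeling

open MycVert

variable {V : Type} (G : SimpleGraph V)

theorem exists_perm_starWalks_isChain {L : List (V × List V)} (hL : ∀ s ∈ L, IsStar Gᶜ 4 s) :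
    ∃ w : List (MycVert V), w.Perm (L.flatMap fun s => starWalk s.1 s.2) ∧
      (root :: w).IsChain (fun x y => ¬ (mycielski G).Adj x y) := by
  obtain ⟨hchain, -, hlast⟩ := List.isChain_flatMap_of_forall_rel
    (R := fun x y => ¬ (mycielski G).Adj x y) (p := fun x => ∃ a, x = copy a)
    (f := fun s => starWalk s.1 s.2) (L := L)
    (fun x y ⟨a, ha⟩ ⟨b, hb⟩ => by subst ha hb; exact mycielski_not_adj_copy_copy G) fun s hs => by
      obtain ⟨hc, -, -, a, r, b, hw⟩ := starWalk_spec G (hL s hs)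
      have hlast : (starWalk s.1 s.2).getLast? = some (copy b) := by
        rw [hw, ← List.cons_append, ← List.cons_append, List.getLast?_concat]
      exact ⟨hc, fun x hx => ⟨a, by simpa [hw, eq_comm] using hx⟩,
        fun x hx => ⟨b, by simpa [hlast, eq_comm] using hx⟩⟩
  rcases L with _ | ⟨s, L⟩
  · exact ⟨[], by simp, List.isChain_singleton _⟩
  obtain ⟨-, -, -, a, r, b, hw⟩ := starWalk_spec G (hL s List.mem_cons_self)
  simp only [List.flatMap_cons, hw, List.cons_append] at hchain hlast ⊢
  -- The root goes next to `orig a`, and `copy a` moves to the end, after another copy.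
  refine ⟨_, List.perm_append_singleton (copy a) _, List.isChain_cons_cons.2
    ⟨mycielski_not_adj_root_orig G, hchain.tail.append (List.isChain_singleton _) ?_⟩⟩
  intro x hx y hy
  obtain ⟨c, rfl⟩ := hlast x (by rwa [List.getLast?_cons_cons])
  obtain rfl : y = copy a := by simpa [eq_comm] using hy
  exact mycielski_not_adj_copy_copy G

theorem lambdaNumber_mycielski_le_of_isStarPartition [Fintype V] {L : List (V × List V)}
    (hL : IsStarPartition Gᶜ 4 L Finset.univ) :
    lambdaNumber (mycielski G) ≤ 2 * Fintype.card V := by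
  have hspec (s) (hs : s ∈ L) := starWalk_spec G (hL.1 s hs)
  obtain ⟨w, hperm, hw⟩ := exists_perm_starWalks_isChain G hL.1
  have hcard : (starVertices L).length = Fintype.card V := by
    rw [← Multiset.coe_card, hL.2]
    rfl
  have hlen : w.length = 2 * Fintype.card V := by
    rw [hperm.length_eq, List.length_flatMap, List.map_congr_left fun s hs => (hspec s hs).2.1,
      List.sum_map_mul_left, ← hcard, starVertices, List.length_flatMap]
    simp
  have hmem (v : V) : orig v ∈ w ∧ copy v ∈ w := by
    have hv : v ∈ starVertices L := by
      rw [← Multiset.mem_coe, hL.2]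
      exact Finset.mem_univ v
    obtain ⟨s, hs, hvs⟩ := List.mem_flatMap.1 hv
    obtain ⟨ho, hc⟩ := (hspec s hs).2.2.1 v hvs
    exact ⟨hperm.mem_iff.2 (List.mem_flatMap.2 ⟨s, hs, ho⟩),
      hperm.mem_iff.2 (List.mem_flatMap.2 ⟨s, hs, hc⟩)⟩
  refine (lambdaNumber_le_of_isChain _ (root :: w) (fun x => ?_) hw).trans (by simp [hlen])
  rcases x with v | v | ⟨⟩
  · exact .tail _ (hmem v).1
  · exact .tail _ (hmem v).2
  · exact List.mem_cons_self

theorem lambdaNumber_mycielski_le_of_card_le_one [Fintype V] (hV : Fintype.card V ≤ 1) :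
    lambdaNumber (mycielski G) ≤ 2 * Fintype.card V := by
  rcases Nat.le_one_iff_eq_zero_or_eq_one.1 hV with h0 | h1
  · have : IsEmpty V := Fintype.card_eq_zero_iff.1 h0
    refine (lambdaNumber_le_of_isChain _ [root] (fun x => ?_) (List.isChain_singleton _)).trans
      (by simp)
    rcases x with v | v | ⟨⟩
    · exact isEmptyElim v
    · exact isEmptyElim v
    · exact List.mem_singleton_self _
  · obtain ⟨v, hv⟩ := Fintype.card_eq_one_iff.1 h1
    refine (lambdaNumber_le_of_isChain _ [copy v, orig v, root] (fun x => ?_) ?_).trans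
      (by simp [h1])
    · rcases x with w | w | ⟨⟩
      · simp [hv w, orig]
      · simp [hv w, copy]
      · simp [root]
    · simp

end MycielskiLabeling

open scoped Classical in
/-- For a graph `G` of order `n` with maximum degree `Δ ≤ n - 2` and minimum degree `δ`:
if `3(n-1) + δ ≥ 4Δ`, then `λ(M(G)) ≤ 2n`. -/
theorem lambdaNumber_mycielski_of_degree_condition {V : Type} [Fintype V] (G : SimpleGraph V)
    (n : ℕ) (hn : Fintype.card V = n) (hΔ : G.maxDegree ≤ n - 2)
    (h : 4 * G.maxDegree ≤ 3 * (n - 1) + G.minDegree) :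
    lambdaNumber (mycielski G) ≤ 2 * n := by
  subst hn
  rcases Nat.lt_or_ge (Fintype.card V) 2 with hsmall | hlarge
  · exact lambdaNumber_mycielski_le_of_card_le_one G (by omega)
  obtain ⟨φ, hφ, hfib⟩ := exists_adj_card_fiber_le Gᶜ (k := 4)
    (d := Fintype.card V - 1 - G.maxDegree) (by omega)
    (fun v => by
      have := G.degree_le_maxDegree v
      rw [degree_compl]
      omega)
    (fun v => by
      have := G.minDegree_le_degree v
      rw [degree_compl]
      omega)
  obtain ⟨L, hL⟩ := exists_isStarPartition (k := 4) (by norm_num) hφ Finset.univ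
    (fun v _ => Finset.mem_coe.2 (Finset.mem_univ (φ v))) (by simpa using hfib)
  exact lambdaNumber_mycielski_le_of_isStarPartition G hL
end
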